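/- arXiv:2108.09463 — 3 statements merged into one kernel-verified Lean document; each statement's English description precedes it below -/
import Mathlib

section
/- Let M : ℝ → ℝ³ be smooth with |M(x)| = 1 for all x, and let P : ℝ → ℝ³ be smooth with P(x_i) = M(x_i), |P'(x_i) - M'(x_i)| ≤ C h^p and |P''(x_i) - M''(x_i)| ≤ C h^p at a point x_i. Then the normalized function Q = P/|P| satisfies |Q'(x_i) - M'(x_i)| ≤ C' h^p, where C' depends only on C and a bound on |M'| + |P'|. -/
open RealInnerProductSpace


/-- If `M` is smooth with unit norm, `P` interpolates `M` at `x_i` and its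
first and second derivatives approximate those of `M` to order `h^p` at `x_i`, then the
normalized function `Q = P/|P|` satisfies `|Q'(x_i) - M'(x_i)| ≤ C' h^p`, with `C'`
depending only on `C` and a bound `K` on `|M'| + |P'|`. -/
theorem deriv_normalized_interpolation_error
    (C K : ℝ) (hC : 0 ≤ C) (hK : 0 ≤ K) :
    ∃ C' : ℝ, 0 < C' ∧
      ∀ (M P : ℝ → EuclideanSpace ℝ (Fin 3)) (xi h : ℝ) (p : ℕ),
        0 < h →
        ContDiff ℝ (⊤ : ℕ∞) M → (∀ x, ‖M x‖ = 1) →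
        ContDiff ℝ (⊤ : ℕ∞) P → (∀ᶠ x in nhds xi, P x ≠ 0) →
        P xi = M xi →
        ‖deriv P xi - deriv M xi‖ ≤ C * h ^ p →
        ‖deriv (deriv P) xi - deriv (deriv M) xi‖ ≤ C * h ^ p →
        ‖deriv M xi‖ + ‖deriv P xi‖ ≤ K →
        ∀ Q : ℝ → EuclideanSpace ℝ (Fin 3), (∀ x, Q x = ‖P x‖⁻¹ • P x) →
          ‖deriv Q xi - deriv M xi‖ ≤ C' * h ^ p := by
  refine ⟨2 * C + 1, by positivity, ?_⟩
  intro M P xi h p hh hM hMnorm hP hPne hPxi hd1 hd2 hKbd Q hQ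
  set m := M xi with hm
  set d1 := deriv P xi with hd1def
  set dM := deriv M xi with hdMdef
  have hmn : ‖m‖ = 1 := hMnorm xi
  have hPd : HasDerivAt P d1 xi := (hP.differentiable (by simp) xi).hasDerivAt
  have hMd : HasDerivAt M dM xi := (hM.differentiable (by simp) xi).hasDerivAt
  -- inner of M with itself is constant
  have hMM : ⟪m, dM⟫ = 0 := by
    have h1 : HasDerivAt (fun x => ⟪M x, M x⟫) (⟪M xi, dM⟫ + ⟪dM, M xi⟫) xi :=
      hMd.inner ℝ hMd
    have h2 : HasDerivAt (fun x : ℝ => ⟪M x, M x⟫) 0 xi := by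
      have : (fun x : ℝ => ⟪M x, M x⟫) = fun _ => (1 : ℝ) := by
        funext x
        rw [real_inner_self_eq_norm_sq, hMnorm x]; norm_num
      rw [this]; exact hasDerivAt_const _ _
    have h3 : ⟪m, dM⟫ + ⟪dM, m⟫ = 0 := h1.unique h2
    have h4 : ⟪dM, m⟫ = ⟪m, dM⟫ := real_inner_comm m dM
    linarith
  -- derivative of n x = ⟪P x, P x⟫
  have hnd : HasDerivAt (fun x => ⟪P x, P x⟫) (2 * ⟪m, d1⟫) xi := by
    have := hPd.inner ℝ hPd
    rw [hPxi] at this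
    refine this.congr_deriv ?_
    rw [real_inner_comm d1 m]; ring
  have hn1 : ⟪P xi, P xi⟫ = 1 := by
    rw [hPxi, real_inner_self_eq_norm_sq, hmn]; norm_num
  -- sqrt composition
  have hsd : HasDerivAt (fun x => Real.sqrt ⟪P x, P x⟫) (⟪m, d1⟫) xi := by
    have hs : HasDerivAt Real.sqrt (1 / (2 * Real.sqrt ⟪P xi, P xi⟫)) ⟪P xi, P xi⟫ :=
      Real.hasDerivAt_sqrt (by rw [hn1]; norm_num)
    have := hs.comp xi hnd
    refine this.congr_deriv ?_
    rw [hn1, Real.sqrt_one]; ring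
  have hsval : Real.sqrt ⟪P xi, P xi⟫ = 1 := by rw [hn1, Real.sqrt_one]
  have hginv : HasDerivAt (fun x => (Real.sqrt ⟪P x, P x⟫)⁻¹) (-⟪m, d1⟫) xi := by
    have := hsd.inv (by rw [hsval]; norm_num)
    refine this.congr_deriv ?_
    rw [hsval]; ring
  have hQd : HasDerivAt Q ((Real.sqrt ⟪P xi, P xi⟫)⁻¹ • d1 + (-⟪m, d1⟫) • P xi) xi := by
    have heq : Q = fun x => (Real.sqrt ⟪P x, P x⟫)⁻¹ • P x := by
      funext x
      rw [hQ x]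
      congr 1
      rw [real_inner_self_eq_norm_sq, Real.sqrt_sq (norm_nonneg _)]
    rw [heq]
    exact hginv.smul hPd
  have hQval : deriv Q xi = d1 - ⟪m, d1⟫ • m := by
    rw [hQd.deriv, hsval, hPxi]
    simp [sub_eq_add_neg, neg_smul]
  rw [hQval]
  set d := d1 - dM with hdd
  have key : d1 - ⟪m, d1⟫ • m - dM = d - ⟪m, d⟫ • m := by
    rw [hdd]
    rw [inner_sub_right, hMM]
    module
  rw [key]
  have hcs : |⟪m, d⟫| ≤ ‖d‖ := by
    calc |⟪m, d⟫| ≤ ‖m‖ * ‖d‖ := abs_real_inner_le_norm m d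
    _ = ‖d‖ := by rw [hmn, one_mul]
  have : ‖d - ⟪m, d⟫ • m‖ ≤ ‖d‖ + ‖d‖ := by
    calc ‖d - ⟪m, d⟫ • m‖ ≤ ‖d‖ + ‖⟪m, d⟫ • m‖ := norm_sub_le _ _
    _ = ‖d‖ + |⟪m, d⟫| * ‖m‖ := by rw [norm_smul, Real.norm_eq_abs]
    _ ≤ ‖d‖ + ‖d‖ := by rw [hmn, mul_one]; linarith
  have hhp : (0:ℝ) < h ^ p := pow_pos hh p
  calc ‖d - ⟪m, d⟫ • m‖ ≤ ‖d‖ + ‖d‖ := this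
  _ ≤ C * h ^ p + C * h ^ p := by rw [hdd]; exact add_le_add hd1 hd1
  _ ≤ (2 * C + 1) * h ^ p := by nlinarith
end

section
/- Under the hypotheses of the previous lemma (P(x_i) = M(x_i), |M| ≡ 1, and first and second derivatives of P approximating those of M to order h^p at x_i, with |P'(x_i)| bounded), the second derivative of Q = P/|P| satisfies |Q''(x_i) - P''(x_i)| ≤ C h^p; consequently |Q''(x_i) - M''(x_i)| ≤ C h^p. -/
open RealInnerProductSpace

/-- Under the hypotheses of the interpolation lemma, the second derivative of
`Q = P/|P|` satisfies `|Q''(x_i) - P''(x_i)| ≤ C' h^p`, and consequently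
`|Q''(x_i) - M''(x_i)| ≤ C' h^p`, with `C'` depending only on `C` and `K`. -/
theorem second_deriv_normalized_interpolation_error
    (C K : ℝ) (hC : 0 ≤ C) (hK : 0 ≤ K) :
    ∃ C' : ℝ, 0 < C' ∧
      ∀ (M P : ℝ → EuclideanSpace ℝ (Fin 3)) (xi h : ℝ) (p : ℕ),
        0 < h →
        ContDiff ℝ (⊤ : ℕ∞) M → (∀ x, ‖M x‖ = 1) →
        ContDiff ℝ (⊤ : ℕ∞) P → (∀ᶠ x in nhds xi, P x ≠ 0) →
        P xi = M xi →
        ‖deriv P xi - deriv M xi‖ ≤ C * h ^ p →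
        ‖deriv (deriv P) xi - deriv (deriv M) xi‖ ≤ C * h ^ p →
        ‖deriv M xi‖ ≤ K → ‖deriv P xi‖ ≤ K →
        ∀ Q : ℝ → EuclideanSpace ℝ (Fin 3), (∀ x, Q x = ‖P x‖⁻¹ • P x) →
          ‖deriv (deriv Q) xi - deriv (deriv P) xi‖ ≤ C' * h ^ p ∧
          ‖deriv (deriv Q) xi - deriv (deriv M) xi‖ ≤ C' * h ^ p := by
  refine ⟨(7 * K + 2) * C + 1, by positivity, ?_⟩
  intro M P xi h p hh hM hMnorm hP hPne hPM hD1 hD2 hKM hKP Q hQ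
  have hhp : (0:ℝ) < h ^ p := pow_pos hh p
  -- differentiability facts
  have hPd : Differentiable ℝ P := hP.differentiable (by simp)
  have hP'd : Differentiable ℝ (deriv P) :=
    ((contDiff_infty_iff_deriv.mp (hP.of_le (by simp))).2).differentiable (by simp)
  have hMd : Differentiable ℝ M := hM.differentiable (by simp)
  have hM'd : Differentiable ℝ (deriv M) :=
    ((contDiff_infty_iff_deriv.mp (hM.of_le (by simp))).2).differentiable (by simp)
  -- facts about M
  have hMM : ∀ x, ⟪M x, M x⟫ = 1 := fun x => by
    rw [real_inner_self_eq_norm_sq, hMnorm x]; norm_num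
  have hM'M : ∀ x, ⟪M x, deriv M x⟫ = 0 := by
    intro x
    have h1 : HasDerivAt (fun y => ⟪M y, M y⟫) (⟪M x, deriv M x⟫ + ⟪deriv M x, M x⟫) x :=
      (hMd x).hasDerivAt.inner ℝ (hMd x).hasDerivAt
    have h2 : HasDerivAt (fun y => ⟪M y, M y⟫) 0 x := by
      have he : (fun y => ⟪M y, M y⟫) = fun _ : ℝ => (1:ℝ) := funext hMM
      rw [he]; exact hasDerivAt_const x 1
    have h3 := h1.unique h2
    have hcomm : ⟪deriv M x, M x⟫ = ⟪M x, deriv M x⟫ := real_inner_comm _ _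
    linarith
  have hM2 : ⟪M xi, deriv (deriv M) xi⟫ + ⟪deriv M xi, deriv M xi⟫ = 0 := by
    have h1 : HasDerivAt (fun y => ⟪M y, deriv M y⟫)
        (⟪M xi, deriv (deriv M) xi⟫ + ⟪deriv M xi, deriv M xi⟫) xi :=
      (hMd xi).hasDerivAt.inner ℝ (hM'd xi).hasDerivAt
    have h2 : HasDerivAt (fun y => ⟪M y, deriv M y⟫) 0 xi := by
      have he : (fun y => ⟪M y, deriv M y⟫) = fun _ : ℝ => (0:ℝ) := funext hM'M
      rw [he]; exact hasDerivAt_const xi 0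
    exact h1.unique h2
  -- scalar functions
  set f : ℝ → ℝ := fun x => ⟪P x, P x⟫ with hf_def
  have hfval : ∀ x, f x = ‖P x‖ ^ 2 := fun x => real_inner_self_eq_norm_sq (P x)
  have hsval : ∀ x, Real.sqrt (f x) = ‖P x‖ := fun x => by
    rw [hfval]; exact Real.sqrt_sq (norm_nonneg _)
  have hQ2 : ∀ x, Q x = (Real.sqrt (f x))⁻¹ • P x := fun x => by rw [hQ, hsval]
  set I1 : ℝ → ℝ := fun x => ⟪P x, deriv P x⟫ + ⟪deriv P x, P x⟫ with hI1_def
  have hI1d : ∀ x, HasDerivAt f (I1 x) x := fun x =>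
    (hPd x).hasDerivAt.inner ℝ (hPd x).hasDerivAt
  set G : ℝ → ℝ := fun x =>
    -(I1 x / (2 * Real.sqrt (f x))) / (Real.sqrt (f x)) ^ 2 with hG_def
  -- derivative of Q on the set where P ≠ 0
  have key2 : ∀ x, P x ≠ 0 →
      HasDerivAt Q ((Real.sqrt (f x))⁻¹ • deriv P x + G x • P x) x := by
    intro x hx
    have hfpos : 0 < f x := by rw [hfval]; exact pow_pos (norm_pos_iff.mpr hx) 2
    have hsne : Real.sqrt (f x) ≠ 0 := (Real.sqrt_pos.mpr hfpos).ne'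
    have hg : HasDerivAt (fun y => (Real.sqrt (f y))⁻¹) (G x) x :=
      ((hI1d x).sqrt hfpos.ne').inv hsne
    have h5 : HasDerivAt (fun y => (Real.sqrt (f y))⁻¹ • P y)
        ((Real.sqrt (f x))⁻¹ • deriv P x + G x • P x) x := hg.smul (hPd x).hasDerivAt
    have heq : (fun y => (Real.sqrt (f y))⁻¹ • P y) = Q := funext fun y => (hQ2 y).symm
    rwa [heq] at h5
  -- consequently deriv Q agrees with the explicit formula near xi
  have hPxi : ‖P xi‖ = 1 := by rw [hPM, hMnorm]
  have hPxine : P xi ≠ 0 := by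
    intro h0; rw [h0, norm_zero] at hPxi; norm_num at hPxi
  have hfxi : f xi = 1 := by rw [hfval, hPxi]; norm_num
  have hsxi : Real.sqrt (f xi) = 1 := by rw [hfxi, Real.sqrt_one]
  set a : ℝ := ⟪deriv P xi, P xi⟫ with ha_def
  set b : ℝ := ⟪deriv (deriv P) xi, P xi⟫ + ⟪deriv P xi, deriv P xi⟫ with hb_def
  have hI1xi : I1 xi = 2 * a := by
    simp only [hI1_def, ha_def]; rw [real_inner_comm (P xi)]; ring
  have hGxi : G xi = -a := by
    simp only [hG_def]; rw [hsxi, hI1xi]; norm_num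
  -- second derivative of Q at xi
  have hder_ev : deriv Q =ᶠ[nhds xi]
      (fun x => G x • P x + (Real.sqrt (f x))⁻¹ • deriv P x) := by
    filter_upwards [hPne] with x hx
    rw [(key2 x hx).deriv]; module
  have hderQQ : deriv (deriv Q) xi =
      deriv (fun x => G x • P x + (Real.sqrt (f x))⁻¹ • deriv P x) xi :=
    hder_ev.deriv_eq
  -- derivative of G at xi
  have hI1' : HasDerivAt I1 (2 * b) xi := by
    have h1 : HasDerivAt I1
        ((⟪P xi, deriv (deriv P) xi⟫ + ⟪deriv P xi, deriv P xi⟫) +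
          (⟪deriv P xi, deriv P xi⟫ + ⟪deriv (deriv P) xi, P xi⟫)) xi :=
      ((hPd xi).hasDerivAt.inner ℝ (hP'd xi).hasDerivAt).add
        ((hP'd xi).hasDerivAt.inner ℝ (hPd xi).hasDerivAt)
    convert h1 using 1
    simp only [hb_def]; rw [real_inner_comm (P xi)]; ring
  have hfxine : f xi ≠ 0 := by rw [hfxi]; norm_num
  have hsxine : Real.sqrt (f xi) ≠ 0 := by rw [hsxi]; norm_num
  have hsd : HasDerivAt (fun y => Real.sqrt (f y)) (I1 xi / (2 * Real.sqrt (f xi))) xi :=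
    (hI1d xi).sqrt hfxine
  have hGd : HasDerivAt G (3 * a ^ 2 - b) xi := by
    have hnum : HasDerivAt (fun y => I1 y / (2 * Real.sqrt (f y)))
        ((2 * b * (2 * Real.sqrt (f xi)) -
          I1 xi * (2 * (I1 xi / (2 * Real.sqrt (f xi))))) / (2 * Real.sqrt (f xi)) ^ 2) xi :=
      hI1'.div (hsd.const_mul 2) (by rw [hsxi]; norm_num)
    have hsq : HasDerivAt (fun y => (Real.sqrt (f y)) ^ 2)
        ((2 : ℕ) * (Real.sqrt (f xi)) ^ 1 * (I1 xi / (2 * Real.sqrt (f xi)))) xi :=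
      hsd.pow 2
    have hall : HasDerivAt (fun y => -(I1 y / (2 * Real.sqrt (f y))) / (Real.sqrt (f y)) ^ 2)
        ((-((2 * b * (2 * Real.sqrt (f xi)) - I1 xi * (2 * (I1 xi / (2 * Real.sqrt (f xi))))) /
          (2 * Real.sqrt (f xi)) ^ 2) * Real.sqrt (f xi) ^ 2 - -(I1 xi / (2 * Real.sqrt (f xi))) *
          ((2 : ℕ) * Real.sqrt (f xi) ^ 1 * (I1 xi / (2 * Real.sqrt (f xi))))) /
          (Real.sqrt (f xi) ^ 2) ^ 2) xi :=
      hnum.neg.div hsq (by rw [hsxi]; norm_num)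
    convert hall using 1
    rw [hsxi, hI1xi]
    push_cast
    field_simp
    ring
  have hQ1d : HasDerivAt (fun x => G x • P x + (Real.sqrt (f x))⁻¹ • deriv P x)
      ((G xi • deriv P xi + (3 * a ^ 2 - b) • P xi) +
        ((Real.sqrt (f xi))⁻¹ • deriv (deriv P) xi + G xi • deriv P xi)) xi := by
    have hg : HasDerivAt (fun y => (Real.sqrt (f y))⁻¹) (G xi) xi :=
      (hsd).inv hsxine
    exact (hGd.smul (hPd xi).hasDerivAt).add (hg.smul (hP'd xi).hasDerivAt)
  have hQ'' : deriv (deriv Q) xi =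
      (3 * a ^ 2 - b) • P xi - (2 * a) • deriv P xi + deriv (deriv P) xi := by
    rw [hderQQ, hQ1d.deriv, hGxi, hsxi]
    rw [inv_one, one_smul]
    module
  -- estimates
  have haK : |a| ≤ K := by
    calc |a| ≤ ‖deriv P xi‖ * ‖P xi‖ := abs_real_inner_le_norm _ _
    _ ≤ K := by rw [hPxi]; simpa using hKP
  have haC : |a| ≤ C * h ^ p := by
    have ha2 : a = ⟪deriv P xi - deriv M xi, M xi⟫ := by
      rw [ha_def, hPM, inner_sub_left]
      have h0 : ⟪deriv M xi, M xi⟫ = 0 := by rw [real_inner_comm]; exact hM'M xi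
      rw [h0]; ring
    rw [ha2]
    calc |⟪deriv P xi - deriv M xi, M xi⟫| ≤ ‖deriv P xi - deriv M xi‖ * ‖M xi‖ :=
          abs_real_inner_le_norm _ _
    _ ≤ C * h ^ p := by rw [hMnorm]; simpa using hD1
  have hbC : |b| ≤ (1 + 2 * K) * (C * h ^ p) := by
    have hb2 : b = ⟪deriv (deriv P) xi - deriv (deriv M) xi, M xi⟫ +
        ⟪deriv P xi - deriv M xi, deriv P xi⟫ + ⟪deriv M xi, deriv P xi - deriv M xi⟫ := by
      rw [hb_def, hPM, inner_sub_left, inner_sub_left, inner_sub_right]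
      have h1 : ⟪deriv (deriv M) xi, M xi⟫ = ⟪M xi, deriv (deriv M) xi⟫ :=
        real_inner_comm _ _
      have h2 : ⟪deriv M xi, deriv P xi⟫ = ⟪deriv P xi, deriv M xi⟫ := real_inner_comm _ _
      linarith [hM2]
    rw [hb2]
    have e1 : |⟪deriv (deriv P) xi - deriv (deriv M) xi, M xi⟫| ≤ C * h ^ p := by
      calc |⟪deriv (deriv P) xi - deriv (deriv M) xi, M xi⟫|
          ≤ ‖deriv (deriv P) xi - deriv (deriv M) xi‖ * ‖M xi‖ := abs_real_inner_le_norm _ _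
      _ ≤ C * h ^ p := by rw [hMnorm]; simpa using hD2
    have e2 : |⟪deriv P xi - deriv M xi, deriv P xi⟫| ≤ K * (C * h ^ p) := by
      calc |⟪deriv P xi - deriv M xi, deriv P xi⟫|
          ≤ ‖deriv P xi - deriv M xi‖ * ‖deriv P xi‖ := abs_real_inner_le_norm _ _
      _ ≤ (C * h ^ p) * K := by
            apply mul_le_mul hD1 hKP (norm_nonneg _) (by positivity)
      _ = K * (C * h ^ p) := by ring
    have e3 : |⟪deriv M xi, deriv P xi - deriv M xi⟫| ≤ K * (C * h ^ p) := by
      calc |⟪deriv M xi, deriv P xi - deriv M xi⟫|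
          ≤ ‖deriv M xi‖ * ‖deriv P xi - deriv M xi‖ := abs_real_inner_le_norm _ _
      _ ≤ K * (C * h ^ p) :=
            mul_le_mul hKM hD1 (norm_nonneg _) hK
    calc |⟪deriv (deriv P) xi - deriv (deriv M) xi, M xi⟫ +
        ⟪deriv P xi - deriv M xi, deriv P xi⟫ + ⟪deriv M xi, deriv P xi - deriv M xi⟫|
        ≤ |⟪deriv (deriv P) xi - deriv (deriv M) xi, M xi⟫| +
          |⟪deriv P xi - deriv M xi, deriv P xi⟫| +
          |⟪deriv M xi, deriv P xi - deriv M xi⟫| := by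
          exact (abs_add_le _ _).trans (by gcongr; exact abs_add_le _ _)
    _ ≤ (1 + 2 * K) * (C * h ^ p) := by linarith
  -- main bound
  have hmain : ‖deriv (deriv Q) xi - deriv (deriv P) xi‖ ≤ (7 * K + 1) * (C * h ^ p) := by
    have hdiff : deriv (deriv Q) xi - deriv (deriv P) xi =
        (3 * a ^ 2 - b) • P xi - (2 * a) • deriv P xi := by
      rw [hQ'']; abel
    rw [hdiff]
    calc ‖(3 * a ^ 2 - b) • P xi - (2 * a) • deriv P xi‖
        ≤ ‖(3 * a ^ 2 - b) • P xi‖ + ‖(2 * a) • deriv P xi‖ := norm_sub_le _ _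
    _ = |3 * a ^ 2 - b| * ‖P xi‖ + |2 * a| * ‖deriv P xi‖ := by
        rw [norm_smul, norm_smul, Real.norm_eq_abs, Real.norm_eq_abs]
    _ ≤ |3 * a ^ 2 - b| * 1 + |2 * a| * K := by
        have h1 : ‖P xi‖ ≤ 1 := le_of_eq hPxi
        gcongr
    _ ≤ (3 * (K * (C * h ^ p)) + (1 + 2 * K) * (C * h ^ p)) + (2 * (C * h ^ p)) * K := by
        gcongr ?_ + ?_ * K
        · have h1 : |3 * a ^ 2 - b| ≤ 3 * |a| * |a| + |b| := by
            calc |3 * a ^ 2 - b| ≤ |3 * a ^ 2| + |b| := abs_sub _ _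
            _ = 3 * |a| * |a| + |b| := by
                rw [abs_mul, abs_of_nonneg (by norm_num : (0:ℝ) ≤ 3), abs_pow]; ring
          have h2 : 3 * |a| * |a| ≤ 3 * (K * (C * h ^ p)) := by
            have h3 := mul_le_mul haK haC (abs_nonneg _) hK
            linarith
          linarith
        · rw [abs_mul]
          have : |(2:ℝ)| = 2 := by norm_num
          rw [this]; linarith
    _ = (7 * K + 1) * (C * h ^ p) := by ring
  have hfin : (7 * K + 1) * (C * h ^ p) + C * h ^ p ≤ ((7 * K + 2) * C + 1) * h ^ p := by
    have hr : ((7 * K + 2) * C + 1) * h ^ p =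
        (7 * K + 1) * (C * h ^ p) + C * h ^ p + h ^ p := by ring
    rw [hr]; linarith
  have hfin1 : (7 * K + 1) * (C * h ^ p) ≤ ((7 * K + 2) * C + 1) * h ^ p := by
    have h2 : (0:ℝ) ≤ C * h ^ p := by positivity
    have hr : ((7 * K + 2) * C + 1) * h ^ p =
        (7 * K + 1) * (C * h ^ p) + (C * h ^ p + h ^ p) := by ring
    rw [hr]; linarith
  constructor
  · exact hmain.trans hfin1
  · calc ‖deriv (deriv Q) xi - deriv (deriv M) xi‖
        ≤ ‖deriv (deriv Q) xi - deriv (deriv P) xi‖ +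
          ‖deriv (deriv P) xi - deriv (deriv M) xi‖ := norm_sub_le_norm_sub_add_norm_sub _ _ _
    _ ≤ (7 * K + 1) * (C * h ^ p) + C * h ^ p := by linarith
    _ ≤ ((7 * K + 2) * C + 1) * h ^ p := hfin
end

section
/- Let K : ℝ → ℝ be smooth with compact support in [-1,1] and q+1 continuous derivatives. Then for any 1-periodic smooth function g with zero mean and any ε, μ > 0, |∫ K_μ(x) g(x/ε) dx| ≤ C (ε/μ)^{q+1}, where C depends on K and g but not on ε, μ. -/
open MeasureTheory Function Set intervalIntegral

namespace KOA

noncomputable def P (f : ℝ → ℝ) : ℝ → ℝ :=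
  fun x => (∫ t in (0:ℝ)..x, f t) - ∫ y in (0:ℝ)..1, ∫ t in (0:ℝ)..y, f t

lemma P_hasDerivAt {f : ℝ → ℝ} (hf : Continuous f) (x : ℝ) :
    HasDerivAt (P f) (f x) x := by
  have h1 : HasDerivAt (fun u => ∫ t in (0:ℝ)..u, f t) (f x) x :=
    intervalIntegral.integral_hasDerivAt_right (hf.intervalIntegrable 0 x)
      (hf.stronglyMeasurable.stronglyMeasurableAtFilter) hf.continuousAt
  exact h1.sub_const _

lemma P_continuous {f : ℝ → ℝ} (hf : Continuous f) : Continuous (P f) := by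
  have : Differentiable ℝ (P f) := fun x => (P_hasDerivAt hf x).differentiableAt
  exact this.continuous

lemma P_periodic {f : ℝ → ℝ} (hf : Continuous f) (hp : Periodic f 1)
    (hm : ∫ t in (0:ℝ)..1, f t = 0) : Periodic (P f) 1 := by
  intro x
  have h1 : (∫ t in (0:ℝ)..(x+1), f t) = (∫ t in (0:ℝ)..x, f t) + ∫ t in x..(x+1), f t := by
    rw [intervalIntegral.integral_add_adjacent_intervals (hf.intervalIntegrable 0 x)
      (hf.intervalIntegrable x (x+1))]
  have h2 : (∫ t in x..(x+1), f t) = ∫ t in (0:ℝ)..(0+1), f t := hp.intervalIntegral_add_eq x 0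
  simp only [P, h1, h2, zero_add, hm, add_zero]

lemma P_mean {f : ℝ → ℝ} (hf : Continuous f) : ∫ y in (0:ℝ)..1, P f y = 0 := by
  have hc : Continuous fun u => ∫ t in (0:ℝ)..u, f t := by
    have : (fun u => ∫ t in (0:ℝ)..u, f t)
        = fun u => P f u + ∫ y in (0:ℝ)..1, ∫ t in (0:ℝ)..y, f t := by
      funext u; simp [P]
    rw [this]
    exact (P_continuous hf).add continuous_const
  simp only [P]
  rw [intervalIntegral.integral_sub (hc.intervalIntegrable 0 1)
    (intervalIntegrable_const)]
  simp

noncomputable def Gs (g : ℝ → ℝ) : ℕ → ℝ → ℝ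
  | 0 => g
  | n+1 => P (Gs g n)

lemma Gs_prop {g : ℝ → ℝ} (hg : Continuous g) (hp : Periodic g 1)
    (hm : ∫ t in (0:ℝ)..1, g t = 0) :
    ∀ n, Continuous (Gs g n) ∧ Periodic (Gs g n) 1 ∧ (∫ t in (0:ℝ)..1, Gs g n t) = 0
  | 0 => ⟨hg, hp, hm⟩
  | n+1 => by
    obtain ⟨hc, hpn, hmn⟩ := Gs_prop hg hp hm n
    exact ⟨P_continuous hc, P_periodic hc hpn hmn, P_mean hc⟩

lemma iter_support {K : ℝ → ℝ} (hs : support K ⊆ Icc (-1:ℝ) 1) :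
    ∀ n, support (iteratedDeriv n K) ⊆ Icc (-1:ℝ) 1
  | 0 => by simpa [iteratedDeriv_zero] using hs
  | n+1 => by
    rw [iteratedDeriv_succ]
    exact support_deriv_subset.trans (closure_minimal (iter_support hs n) isClosed_Icc)

end KOA

open KOA

/-- For a compactly supported `C^{q+1}` kernel and a smooth 1-periodic
mean-zero function `g`, `|∫ K_μ(x) g(x/ε) dx| ≤ C (ε/μ)^{q+1}` with `C` depending only
on `K` and `g`. -/
theorem kernel_oscillatory_average
    (K g : ℝ → ℝ) (q : ℕ)
    (hK : ContDiff ℝ (q + 1) K)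
    (hsupp : Function.support K ⊆ Set.Icc (-1 : ℝ) 1)
    (hg : ContDiff ℝ (⊤ : ℕ∞) g)
    (hper : ∀ x, g (x + 1) = g x)
    (hmean : ∫ x in (0 : ℝ)..1, g x = 0) :
    ∃ C : ℝ, 0 < C ∧
      ∀ ε μ : ℝ, 0 < ε → 0 < μ →
        |∫ x, (μ⁻¹ * K (x / μ)) * g (x / ε)| ≤ C * (ε / μ) ^ (q + 1) := by
  have hgc : Continuous g := hg.continuous
  have hGs := Gs_prop hgc hper hmean
  have hKsupp := iter_support hsupp
  have hKc : ∀ n : ℕ, n ≤ q + 1 → Continuous (iteratedDeriv n K) := by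
    intro n hn
    exact hK.continuous_iteratedDeriv n (by exact_mod_cast hn)
  have hKd : ∀ n : ℕ, n ≤ q → ∀ x, HasDerivAt (iteratedDeriv n K)
      (iteratedDeriv (n+1) K x) x := by
    intro n hn x
    have hd : Differentiable ℝ (iteratedDeriv n K) :=
      hK.differentiable_iteratedDeriv n (by exact_mod_cast Nat.lt_succ_of_le hn)
    simpa [← iteratedDeriv_succ] using (hd x).hasDerivAt
  have hval : ∀ n : ℕ, ∀ y : ℝ, y ∉ Set.Icc (-1:ℝ) 1 → iteratedDeriv n K y = 0 := by
    intro n y hy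
    by_contra h
    exact hy (hKsupp n (Function.mem_support.mpr h))
  -- bounds
  obtain ⟨A, hA⟩ : ∃ A, ∀ x, |iteratedDeriv (q+1) K x| ≤ A := by
    have hcpt : HasCompactSupport (iteratedDeriv (q+1) K) :=
      IsCompact.of_isClosed_subset isCompact_Icc (isClosed_tsupport _)
        (closure_minimal (hKsupp (q+1)) isClosed_Icc)
    obtain ⟨A, hA⟩ := (hKc (q+1) le_rfl).bounded_above_of_compact_support hcpt
    exact ⟨A, fun x => by simpa [Real.norm_eq_abs] using hA x⟩
  obtain ⟨B, hB⟩ : ∃ B, ∀ x, |Gs g (q+1) x| ≤ B := by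
    have hbd := ((hGs (q+1)).2.1).isBounded_of_continuous one_ne_zero (hGs (q+1)).1
    obtain ⟨B, hB⟩ := isBounded_iff_forall_norm_le.mp hbd
    exact ⟨B, fun x => hB _ (Set.mem_range_self x)⟩
  have hA0 : 0 ≤ A := le_trans (abs_nonneg _) (hA 0)
  have hB0 : 0 ≤ B := le_trans (abs_nonneg _) (hB 0)
  refine ⟨4*A*B + 1, by nlinarith, ?_⟩
  intro ε μ hε hμ
  set a : ℝ := -(2*μ) with ha
  set b : ℝ := 2*μ with hb
  have hbμ : b / μ = 2 := by rw [hb, mul_div_assoc, div_self hμ.ne', mul_one]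
  have haμ : a / μ = -2 := by rw [ha, neg_div, hbμ]
  have h2 : (2:ℝ) ∉ Set.Icc (-1:ℝ) 1 := by norm_num
  have hn2 : (-2:ℝ) ∉ Set.Icc (-1:ℝ) 1 := by norm_num
  set J : ℕ → ℝ := fun n => ∫ x in a..b, μ⁻¹ * iteratedDeriv n K (x/μ) * Gs g n (x/ε)
    with hJ
  have step : ∀ n : ℕ, n ≤ q → J n = -((ε/μ) * J (n+1)) := by
    intro n hn
    have hucont : Continuous fun x => μ⁻¹ * (iteratedDeriv (n+1) K (x/μ) * μ⁻¹) :=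
      continuous_const.mul
        (((hKc (n+1) (by omega)).comp (continuous_id.div_const μ)).mul continuous_const)
    have hvcont : Continuous fun x => Gs g n (x/ε) * ε⁻¹ :=
      (((hGs n).1).comp (continuous_id.div_const ε)).mul continuous_const
    have hu : ∀ x ∈ Set.uIcc a b, HasDerivAt (fun x => μ⁻¹ * iteratedDeriv n K (x/μ))
        (μ⁻¹ * (iteratedDeriv (n+1) K (x/μ) * μ⁻¹)) x := by
      intro x _
      have h1 : HasDerivAt (fun x : ℝ => x/μ) μ⁻¹ x := by
        simpa [one_div] using (hasDerivAt_id x).div_const μ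
      exact ((hKd n hn (x/μ)).comp x h1).const_mul μ⁻¹
    have hv : ∀ x ∈ Set.uIcc a b, HasDerivAt (fun x => Gs g (n+1) (x/ε))
        (Gs g n (x/ε) * ε⁻¹) x := by
      intro x _
      have h1 : HasDerivAt (fun x : ℝ => x/ε) ε⁻¹ x := by
        simpa [one_div] using (hasDerivAt_id x).div_const ε
      exact (P_hasDerivAt (hGs n).1 (x/ε)).comp x h1
    have ibp := intervalIntegral.integral_mul_deriv_eq_deriv_mul hu hv
      (hucont.intervalIntegrable a b) (hvcont.intervalIntegrable a b)
    have hub : μ⁻¹ * iteratedDeriv n K (b/μ) = 0 := by rw [hbμ, hval n 2 h2, mul_zero]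
    have hua : μ⁻¹ * iteratedDeriv n K (a/μ) = 0 := by rw [haμ, hval n (-2) hn2, mul_zero]
    rw [hub, hua, zero_mul, zero_mul, sub_zero, zero_sub] at ibp
    have l1 : (∫ x in a..b, (μ⁻¹ * iteratedDeriv n K (x/μ)) * (Gs g n (x/ε) * ε⁻¹))
        = ε⁻¹ * J n := by
      rw [hJ, ← intervalIntegral.integral_const_mul]
      apply intervalIntegral.integral_congr
      intro x _; ring
    have l2 : (∫ x in a..b, (μ⁻¹ * (iteratedDeriv (n+1) K (x/μ) * μ⁻¹)) * Gs g (n+1) (x/ε))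
        = μ⁻¹ * J (n+1) := by
      rw [hJ, ← intervalIntegral.integral_const_mul]
      apply intervalIntegral.integral_congr
      intro x _; ring
    rw [l1, l2] at ibp
    calc J n = ε * (ε⁻¹ * J n) := by rw [mul_inv_cancel_left₀ hε.ne']
      _ = ε * -(μ⁻¹ * J (n+1)) := by rw [ibp]
      _ = -((ε/μ) * J (n+1)) := by ring
  have iter : ∀ m : ℕ, m ≤ q + 1 → J 0 = (-(ε/μ))^m * J m := by
    intro m
    induction m with
    | zero => intro _; simp
    | succ k ih =>
      intro hk
      rw [ih (by omega), step k (by omega)]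
      ring
  have hdiv : 0 < ε / μ := div_pos hε hμ
  have habs : |J 0| = (ε/μ)^(q+1) * |J (q+1)| := by
    rw [iter (q+1) le_rfl, abs_mul, abs_pow, abs_neg, abs_of_pos hdiv]
  have hbound : |J (q+1)| ≤ 4*A*B := by
    have hpt : ∀ x ∈ Set.uIoc a b,
        ‖μ⁻¹ * iteratedDeriv (q+1) K (x/μ) * Gs g (q+1) (x/ε)‖ ≤ μ⁻¹ * A * B := by
      intro x _
      rw [Real.norm_eq_abs, abs_mul, abs_mul, abs_of_pos (inv_pos.mpr hμ)]
      have h1 : |iteratedDeriv (q+1) K (x/μ)| ≤ A := hA _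
      have h2 : |Gs g (q+1) (x/ε)| ≤ B := hB _
      have := mul_le_mul h1 h2 (abs_nonneg _) hA0
      have h3 : 0 ≤ μ⁻¹ := (inv_pos.mpr hμ).le
      nlinarith [abs_nonneg (iteratedDeriv (q+1) K (x/μ)), abs_nonneg (Gs g (q+1) (x/ε))]
    have := intervalIntegral.norm_integral_le_of_norm_le_const hpt
    rw [Real.norm_eq_abs] at this
    have hba : |b - a| = 4 * μ := by
      rw [ha, hb]
      rw [abs_of_pos (by linarith)]
      ring
    rw [hba] at this
    calc |J (q+1)| ≤ μ⁻¹ * A * B * (4 * μ) := this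
      _ = 4*A*B := by field_simp
  have h0 : (∫ x, (μ⁻¹ * K (x / μ)) * g (x / ε)) = J 0 := by
    have hsub : Function.support (fun x => (μ⁻¹ * K (x / μ)) * g (x / ε)) ⊆ Set.Ioc a b := by
      intro x hx
      have hK0 : K (x / μ) ≠ 0 := by
        intro h0'
        apply hx
        simp [h0']
      have hmem := hsupp (Function.mem_support.mpr hK0)
      obtain ⟨hm1, hm2⟩ := hmem
      have hx1 : x ≤ μ := (div_le_one hμ).mp hm2
      have hx2 : -1 * μ ≤ x := (le_div_iff₀ hμ).mp hm1
      constructor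
      · rw [ha]; linarith
      · rw [hb]; linarith
    rw [hJ, ← intervalIntegral.integral_eq_integral_of_support_subset hsub]
    apply intervalIntegral.integral_congr
    intro x _
    simp [Gs, iteratedDeriv_zero, mul_assoc]
  rw [h0, habs]
  have hp : 0 ≤ (ε/μ)^(q+1) := by positivity
  nlinarith [mul_le_mul_of_nonneg_left hbound hp, abs_nonneg (J (q+1))]
end
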